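/- Let R be a commutative ring, q ∈ R, A a commutative R-algebra and y ∈ A, and assume the q-characteristic of R is p > 0. Let u : A⟨ω⟩_{1,y^p} → A⟨ξ⟩_{q,y} be the A-linear map with u(ω^{[k]}) = ξ^{[kp]} for all k (the twisted divided p-power map). Then: (1) if R is q-flat, u is a ring homomorphism; (2) if R is q-divisible, u induces an isomorphism of A-algebras A⟨ω⟩_{1,y^p} ≅ A⟨ξ⟩_{q,y}/(ξ), where (ξ) is the ideal generated by ξ = ξ^{[1]}. -/

import Mathlib

def qInt {R : Type*} [CommRing R] (q : R) (m : ℕ) : R := ∑ i ∈ Finset.range m, q ^ i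

def qChoose {R : Type*} [CommRing R] (q : R) : ℕ → ℕ → R
  | _, 0 => 1
  | 0, _ + 1 => 0
  | n + 1, k + 1 => qChoose q n k + q ^ (k + 1) * qChoose q n (k + 1)

def dpCoeff {A : Type*} [CommRing A] (q y : A) (m n i : ℕ) : A :=
  (-1 : A) ^ i * q ^ (i * (i - 1) / 2) * qChoose q (m + n - i) m * qChoose q m i * y ^ i

/-!
Since `(p)_q = 0` we have `q ^ p = 1`, and q-flatness makes `(m)_q` regular for `0 < m < p`, so
`(p choose k)_q = 0` for `0 < k < p`. The q-Lucas theorem then gives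
`(ap choose bp)_q = (a choose b)` and `(ap choose i)_q = 0` for `p ∤ i`, while
`(-1)^(lp) q^(lp choose 2) = (-1)^l`. Hence the structure constants of `ξ^[jp] ξ^[kp]` are
exactly those of `ω^[j] ω^[k]`, and `u` is multiplicative. For (2),
`ξ ξ^[n] = (n+1)_q ξ^[n+1] - (n)_q y ξ^[n]` shows, once the nonzero `(m)_q` are units, that
`(ξ)` is the span of the `ξ^[n]` with `p ∤ n`, a complement of the image of `u`.
-/

open Finset

section QAnalogues

variable {R S : Type*} [CommRing R] [CommRing S] (q : R)

@[simp] lemma qInt_zero : qInt q 0 = 0 := by simp [qInt]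

@[simp] lemma qInt_one : qInt q 1 = 1 := by simp [qInt]

lemma qInt_add (m n : ℕ) : qInt q (m + n) = qInt q m + q ^ m * qInt q n := by
  simp only [qInt, sum_range_add, pow_add, mul_sum]

lemma map_qInt (f : R →+* S) (m : ℕ) : f (qInt q m) = qInt (f q) m := by
  simp [qInt]

@[simp] lemma qChoose_zero_right (n : ℕ) : qChoose q n 0 = 1 := by cases n <;> rfl

@[simp] lemma qChoose_zero_succ (k : ℕ) : qChoose q 0 (k + 1) = 0 := rfl

lemma qChoose_succ_succ (n k : ℕ) :
    qChoose q (n + 1) (k + 1) = qChoose q n k + q ^ (k + 1) * qChoose q n (k + 1) := rfl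

lemma qChoose_eq_zero_of_lt {n k : ℕ} (h : n < k) : qChoose q n k = 0 := by
  induction n generalizing k with
  | zero => obtain ⟨k, rfl⟩ := Nat.exists_eq_succ_of_ne_zero h.ne'; rfl
  | succ n ih =>
    obtain ⟨k, rfl⟩ := Nat.exists_eq_succ_of_ne_zero (Nat.ne_zero_of_lt h)
    rw [qChoose_succ_succ, ih (by omega), ih (by omega), mul_zero, add_zero]

@[simp] lemma qChoose_self (n : ℕ) : qChoose q n n = 1 := by
  induction n with
  | zero => rfl
  | succ n ih =>
    rw [qChoose_succ_succ, ih, qChoose_eq_zero_of_lt q n.lt_succ_self, mul_zero, add_zero]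

lemma qChoose_one_right (n : ℕ) : qChoose q n 1 = qInt q n := by
  induction n with
  | zero => simp
  | succ n ih =>
    rw [qChoose_succ_succ, qChoose_zero_right, ih, add_comm n, qInt_add, qInt_one, pow_one]

lemma map_qChoose (f : R →+* S) (n k : ℕ) : f (qChoose q n k) = qChoose (f q) n k := by
  induction n generalizing k with
  | zero => cases k <;> simp
  | succ n ih => cases k <;> simp [qChoose_succ_succ, ih]

lemma qChoose_one_left (n k : ℕ) : qChoose (1 : R) n k = n.choose k := by
  induction n generalizing k with
  | zero => cases k <;> simp
  | succ n ih => cases k <;> simp [qChoose_succ_succ, ih, Nat.choose_succ_succ]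

def qFactorial (n : ℕ) : R := ∏ i ∈ range n, qInt q (i + 1)

@[simp] lemma qFactorial_zero : qFactorial q 0 = 1 := prod_range_zero _

lemma qFactorial_succ (n : ℕ) : qFactorial q (n + 1) = qFactorial q n * qInt q (n + 1) :=
  prod_range_succ _ _

lemma qChoose_mul_qFactorial_mul_qFactorial {n k : ℕ} (h : k ≤ n) :
    qChoose q n k * (qFactorial q k * qFactorial q (n - k)) = qFactorial q n := by
  induction n generalizing k with
  | zero => obtain rfl := Nat.le_zero.mp h; simp [qFactorial]
  | succ n ih =>
    rcases k with _ | k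
    · simp [qFactorial]
    rcases (Nat.lt_or_ge k n) with hk | hk
    · obtain ⟨d, rfl⟩ : ∃ d, n = k + 1 + d := ⟨n - (k + 1), by omega⟩
      have hk' := ih (k := k) (by omega)
      have hk1 := ih (k := k + 1) (by omega)
      rw [show k + 1 + d - k = d + 1 by omega] at hk'
      rw [show k + 1 + d - (k + 1) = d by omega] at hk1
      rw [show k + 1 + d + 1 - (k + 1) = d + 1 by omega, qChoose_succ_succ,
        qFactorial_succ q (k + 1 + d), show k + 1 + d + 1 = k + 1 + (d + 1) by omega,
        qInt_add q (k + 1) (d + 1)]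
      linear_combination qInt q (k + 1) * hk' + q ^ (k + 1) * qInt q (d + 1) * hk1 +
        qChoose q (k + 1 + d) k * qFactorial q (d + 1) * qFactorial_succ q k +
        q ^ (k + 1) * qChoose q (k + 1 + d) (k + 1) * qFactorial q (k + 1) * qFactorial_succ q d
    · obtain rfl : k = n := by omega
      simp

end QAnalogues

lemma Nat.choose_two_add (m n : ℕ) : (m + n).choose 2 = m.choose 2 + n.choose 2 + m * n := by
  induction n with
  | zero => simp
  | succ n ih =>
    rw [← add_assoc, Nat.choose_succ_succ, Nat.choose_succ_succ, ih, Nat.choose_one_right,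
      Nat.choose_one_right]
    ring

section QCharacteristic

variable {R : Type*} [CommRing R] {q : R} {p : ℕ}

lemma pow_eq_one_of_qInt_eq_zero (hp0 : qInt q p = 0) : q ^ p = 1 := by
  have h := geom_sum_mul q p
  rw [← qInt, hp0, zero_mul] at h
  exact sub_eq_zero.mp h.symm

lemma qInt_mod (hp0 : qInt q p = 0) (m : ℕ) : qInt q m = qInt q (m % p) := by
  conv_lhs => rw [← Nat.mod_add_div m p]
  induction m / p with
  | zero => simp
  | succ i ih => rw [Nat.mul_succ, ← add_assoc, qInt_add, hp0, mul_zero, add_zero, ih]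

lemma qInt_eq_zero_iff_dvd (hp : 0 < p) (hp0 : qInt q p = 0)
    (hmin : ∀ m : ℕ, 0 < m → m < p → qInt q m ≠ 0) (m : ℕ) :
    qInt q m = 0 ↔ p ∣ m := by
  rw [qInt_mod hp0, Nat.dvd_iff_mod_eq_zero]
  refine ⟨fun h => ?_, fun h => by rw [h, qInt_zero]⟩
  by_contra hne
  exact hmin _ (Nat.pos_of_ne_zero hne) (Nat.mod_lt m hp) h

lemma isRegular_qFactorial (hreg : ∀ m : ℕ, 0 < m → m < p → IsRegular (qInt q m)) {k : ℕ}
    (hk : k < p) : IsRegular (qFactorial q k) := by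
  induction k with
  | zero => simpa using isRegular_one
  | succ k ih => rw [qFactorial_succ]; exact (ih (by omega)).mul (hreg _ k.succ_pos hk)

lemma qChoose_char_eq_zero (hp0 : qInt q p = 0)
    (hreg : ∀ m : ℕ, 0 < m → m < p → IsRegular (qInt q m)) {k : ℕ} (hk0 : 0 < k)
    (hkp : k < p) : qChoose q p k = 0 := by
  have h := qChoose_mul_qFactorial_mul_qFactorial q hkp.le
  obtain ⟨n, rfl⟩ := Nat.exists_eq_succ_of_ne_zero (by omega : p ≠ 0)
  rw [qFactorial_succ, hp0, mul_zero] at h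
  exact ((isRegular_qFactorial hreg hkp).mul
    (isRegular_qFactorial hreg (by omega))).right.mul_right_eq_zero_iff.mp h

def qLucas (q : R) (p n k : ℕ) : R := (n / p).choose (k / p) * qChoose q (n % p) (k % p)

lemma qLucas_mul_add (hp : 0 < p) {r s : ℕ} (hr : r < p) (hs : s < p) (a b : ℕ) :
    qLucas q p (a * p + r) (b * p + s) = a.choose b * qChoose q r s := by
  have hdiv {c t : ℕ} (ht : t < p) : (c * p + t) / p = c := by
    rw [add_comm, Nat.add_mul_div_right _ _ hp, Nat.div_eq_of_lt ht, zero_add]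
  have hmod {c t : ℕ} (ht : t < p) : (c * p + t) % p = t := by
    rw [add_comm, Nat.add_mul_mod_self_right, Nat.mod_eq_of_lt ht]
  rw [qLucas, hdiv hr, hdiv hs, hmod hr, hmod hs]

lemma qLucas_succ_succ (hp : 0 < p) (hp0 : qInt q p = 0)
    (hreg : ∀ m : ℕ, 0 < m → m < p → IsRegular (qInt q m)) (n k : ℕ) :
    qLucas q p (n + 1) (k + 1) = qLucas q p n k + q ^ (k + 1) * qLucas q p n (k + 1) := by
  obtain ⟨n1, n0, hn0, rfl⟩ : ∃ n1 n0, n0 < p ∧ n = n1 * p + n0 :=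
    ⟨n / p, n % p, Nat.mod_lt n hp, (Nat.div_add_mod' n p).symm⟩
  obtain ⟨k1, k0, hk0, rfl⟩ : ∃ k1 k0, k0 < p ∧ k = k1 * p + k0 :=
    ⟨k / p, k % p, Nat.mod_lt k hp, (Nat.div_add_mod' k p).symm⟩
  rw [add_assoc (k1 * p), pow_add, pow_mul', pow_eq_one_of_qInt_eq_zero hp0, one_pow, one_mul,
    qLucas_mul_add hp hn0 hk0]
  -- split on whether `n + 1` and `k + 1` reach the next multiple of `p`
  rcases (show n0 + 1 < p ∨ n0 + 1 = p by omega) with hn | hn <;>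
    rcases (show k0 + 1 < p ∨ k0 + 1 = p by omega) with hk | hk
  · rw [add_assoc (n1 * p), qLucas_mul_add hp hn hk, qLucas_mul_add hp hn0 hk, qChoose_succ_succ]
    ring
  · have ek : k1 * p + (k0 + 1) = (k1 + 1) * p + 0 := by rw [Nat.succ_mul, hk, add_zero]
    rw [add_assoc (n1 * p), ek, qLucas_mul_add hp hn hp, qLucas_mul_add hp hn0 hp,
      qChoose_eq_zero_of_lt q (show n0 < k0 by omega), hk, pow_eq_one_of_qInt_eq_zero hp0]
    simp
  · have en : n1 * p + n0 + 1 = (n1 + 1) * p + 0 := by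
      rw [Nat.succ_mul, ← hn, add_zero, add_assoc]
    have hpk : qChoose q (n0 + 1) (k0 + 1) = 0 :=
      hn ▸ qChoose_char_eq_zero hp0 hreg k0.succ_pos hk
    rw [en, qLucas_mul_add hp hp hk, qLucas_mul_add hp hn0 hk, qChoose_zero_succ]
    rw [qChoose_succ_succ] at hpk
    linear_combination (-(n1.choose k1 : R)) * hpk
  · have en : n1 * p + n0 + 1 = (n1 + 1) * p + 0 := by
      rw [Nat.succ_mul, ← hn, add_zero, add_assoc]
    have ek : k1 * p + (k0 + 1) = (k1 + 1) * p + 0 := by rw [Nat.succ_mul, hk, add_zero]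
    obtain rfl : n0 = k0 := by omega
    rw [en, ek, qLucas_mul_add hp hp hp, qLucas_mul_add hp hn0 hp, hk,
      pow_eq_one_of_qInt_eq_zero hp0, Nat.choose_succ_succ]
    simp

theorem qChoose_eq_qLucas (hp : 0 < p) (hp0 : qInt q p = 0)
    (hreg : ∀ m : ℕ, 0 < m → m < p → IsRegular (qInt q m)) (n k : ℕ) :
    qChoose q n k = qLucas q p n k := by
  induction n generalizing k with
  | zero =>
    rcases k with _ | k
    · simp [qLucas]
    rw [qChoose_zero_succ, qLucas, Nat.zero_div, Nat.zero_mod]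
    by_cases hk : (k + 1) % p = 0
    · have hk' : 0 < (k + 1) / p :=
        Nat.div_pos (Nat.le_of_dvd k.succ_pos (Nat.dvd_of_mod_eq_zero hk)) hp
      rw [Nat.choose_eq_zero_of_lt hk', Nat.cast_zero, zero_mul]
    · rw [qChoose_eq_zero_of_lt q (Nat.pos_of_ne_zero hk), mul_zero]
  | succ n ih =>
    rcases k with _ | k
    · simp [qLucas]
    rw [qChoose_succ_succ, ih, ih, qLucas_succ_succ hp hp0 hreg]

lemma qChoose_mul_mul (hp : 0 < p) (hp0 : qInt q p = 0)
    (hreg : ∀ m : ℕ, 0 < m → m < p → IsRegular (qInt q m)) (a b : ℕ) :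
    qChoose q (a * p) (b * p) = a.choose b := by
  simpa using (qChoose_eq_qLucas hp hp0 hreg _ _).trans (qLucas_mul_add hp hp hp a b)

lemma qChoose_mul_eq_zero_of_not_dvd (hp : 0 < p) (hp0 : qInt q p = 0)
    (hreg : ∀ m : ℕ, 0 < m → m < p → IsRegular (qInt q m)) (a : ℕ) {i : ℕ}
    (hi : ¬ p ∣ i) : qChoose q (a * p) i = 0 := by
  rw [qChoose_eq_qLucas hp hp0 hreg, qLucas, Nat.mul_mod_left,
    qChoose_eq_zero_of_lt q (Nat.pos_of_ne_zero (mt Nat.dvd_of_mod_eq_zero hi)), mul_zero]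

lemma pow_eq_neg_one_of_qInt_add_self_eq_zero {s : ℕ} (h : qInt q (s + s) = 0)
    (hs : IsRegular (qInt q s)) : q ^ s = -1 := by
  rw [qInt_add, ← one_add_mul] at h
  linear_combination hs.right.mul_right_eq_zero_iff.mp h

lemma neg_one_pow_mul_pow_choose_two_char (hp : 0 < p) (hp0 : qInt q p = 0)
    (hreg : ∀ m : ℕ, 0 < m → m < p → IsRegular (qInt q m)) :
    (-1 : R) ^ p * q ^ p.choose 2 = -1 := by
  rcases Nat.even_or_odd' p with ⟨s, rfl | rfl⟩
  · have hq : q ^ s = -1 :=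
      pow_eq_neg_one_of_qInt_add_self_eq_zero (two_mul s ▸ hp0) (hreg s (by omega) (by omega))
    rw [Nat.choose_two_right, mul_assoc, Nat.mul_div_cancel_left _ two_pos, pow_mul q, hq, pow_mul,
      neg_one_sq, one_pow, one_mul, Odd.neg_one_pow ⟨s - 1, by omega⟩]
  · rw [Nat.choose_two_right, Nat.add_sub_cancel,
      show (2 * s + 1) * (2 * s) = 2 * ((2 * s + 1) * s) by ring, Nat.mul_div_cancel_left _ two_pos,
      pow_mul, pow_eq_one_of_qInt_eq_zero hp0, one_pow, mul_one,
      Odd.neg_one_pow ⟨s, rfl⟩]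

lemma neg_one_pow_mul_pow_choose_two_mul_char (hp : 0 < p) (hp0 : qInt q p = 0)
    (hreg : ∀ m : ℕ, 0 < m → m < p → IsRegular (qInt q m)) (l : ℕ) :
    (-1 : R) ^ (l * p) * q ^ (l * p).choose 2 = (-1) ^ l := by
  induction l with
  | zero => simp
  | succ l ih =>
    rw [Nat.succ_mul, Nat.choose_two_add, pow_add, pow_add, pow_add, pow_mul' q,
      pow_eq_one_of_qInt_eq_zero hp0, one_pow, mul_one, pow_succ]
    calc (-1 : R) ^ (l * p) * (-1) ^ p * (q ^ (l * p).choose 2 * q ^ p.choose 2)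
        = ((-1) ^ (l * p) * q ^ (l * p).choose 2) * ((-1) ^ p * q ^ p.choose 2) := by ring
      _ = (-1) ^ l * -1 := by rw [ih, neg_one_pow_mul_pow_choose_two_char hp hp0 hreg]

end QCharacteristic

lemma Finset.sum_range_mul_add_one_eq_sum_mul {M : Type*} [AddCommMonoid M] {p : ℕ} (hp : 0 < p)
    (N : ℕ) {F : ℕ → M} (hF : ∀ i, ¬ p ∣ i → F i = 0) :
    ∑ i ∈ range (N * p + 1), F i = ∑ l ∈ range (N + 1), F (l * p) := by
  refine ((sum_subset (fun i hi => ?_) fun i hi hni => hF i fun ⟨l, hl⟩ => hni ?_).symm.trans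
    (sum_map (range (N + 1)) ⟨(· * p), fun a b h => Nat.eq_of_mul_eq_mul_right hp h⟩ F))
  · obtain ⟨l, hl, rfl⟩ := mem_map.mp hi
    show l * p ∈ range (N * p + 1)
    simp only [mem_range] at hl ⊢
    nlinarith
  · subst hl
    simp only [mem_range, mem_map] at hi ⊢
    exact ⟨l, by nlinarith, mul_comm l p⟩

theorem Module.Basis.exists_algHom_of_constr_mul {ι A B C : Type*} [CommSemiring A]
    [Semiring B] [Algebra A B] [Semiring C] [Algebra A C] (c : Module.Basis ι A C) (f : ι → B)
    (hone : c.constr A f 1 = 1) (hmul : ∀ i j, c.constr A f (c i * c j) = f i * f j) :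
    ∃ u : C →ₐ[A] B, ∀ i, u (c i) = f i := by
  refine ⟨AlgHom.ofLinearMap (c.constr A f) hone ?_, c.constr_basis A f⟩
  rw [LinearMap.map_mul_iff]
  refine c.ext fun i => c.ext fun j => ?_
  simpa using hmul i j

theorem AlgHom.bijective_quotient_mkₐ_comp {A B C : Type*} [CommRing A] [CommRing B] [Algebra A B]
    [Ring C] [Algebra A C] {u : C →ₐ[A] B} (hu : Function.Injective u) {I : Ideal B}
    (hI : IsCompl (LinearMap.range u.toLinearMap) (I.restrictScalars A)) :
    Function.Bijective ((Ideal.Quotient.mkₐ A I).comp u) := by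
  refine ⟨(injective_iff_map_eq_zero _).mpr fun x hx => ?_, fun z => ?_⟩
  · have hxI : u x ∈ I := Ideal.Quotient.eq_zero_iff_mem.mp hx
    exact (map_eq_zero_iff u hu).mp (Submodule.disjoint_def.mp hI.disjoint _ ⟨x, rfl⟩ hxI)
  · obtain ⟨z, rfl⟩ := Ideal.Quotient.mkₐ_surjective A I z
    obtain ⟨_, i, ⟨x, rfl⟩, hi, rfl⟩ :=
      Submodule.codisjoint_iff_exists_add_eq.mp hI.codisjoint z
    exact ⟨x, by simp [Ideal.Quotient.eq_zero_iff_mem.mpr hi]⟩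

/-- `b n` plays the role of `ξ^{[n]}` in `A⟨ξ⟩_{q,y}`. -/
def IsTwistedDividedPowerBasis {A B : Type*} [CommRing A] [CommRing B] [Algebra A B] (q y : A)
    (b : Module.Basis ℕ A B) : Prop :=
  ∀ m n : ℕ, b m * b n = ∑ i ∈ range (min m n + 1), dpCoeff q y m n i • b (m + n - i)

namespace IsTwistedDividedPowerBasis

variable {A B : Type*} [CommRing A] [CommRing B] [Algebra A B] {q y : A}
  {b : Module.Basis ℕ A B} {p : ℕ}

lemma basis_zero (hb : IsTwistedDividedPowerBasis q y b) : b 0 = 1 := by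
  have h : LinearMap.mulLeft A (b 0) = LinearMap.id := b.ext fun n => by simp [hb 0 n, dpCoeff]
  simpa using LinearMap.congr_fun h 1

lemma basis_one_mul (hb : IsTwistedDividedPowerBasis q y b) (n : ℕ) :
    b 1 * b n = qInt q (n + 1) • b (n + 1) - (qInt q n * y) • b n := by
  rcases n with _ | n
  · simp [hb 1 0, dpCoeff]
  rw [hb, show min 1 (n + 1) = 1 by omega, sum_range_succ, sum_range_one]
  simp [dpCoeff, qChoose_one_right, add_comm 1, sub_eq_add_neg]

lemma basis_one_mul_mem_span (hb : IsTwistedDividedPowerBasis q y b)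
    (hzero : ∀ m, p ∣ m → qInt q m = 0) (n : ℕ) :
    b 1 * b n ∈ Submodule.span A (b '' {n | ¬ p ∣ n}) := by
  have hmem (m : ℕ) : qInt q m • b m ∈ Submodule.span A (b '' {n | ¬ p ∣ n}) := by
    by_cases hm : p ∣ m
    · simp [hzero m hm]
    · exact Submodule.smul_mem _ _ (Submodule.subset_span ⟨m, hm, rfl⟩)
  rw [hb.basis_one_mul, mul_comm, mul_smul]
  exact sub_mem (hmem _) (Submodule.smul_mem _ _ (hmem n))

lemma restrictScalars_span_le (hb : IsTwistedDividedPowerBasis q y b)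
    (hzero : ∀ m, p ∣ m → qInt q m = 0) :
    (Ideal.span {b 1}).restrictScalars A ≤ Submodule.span A (b '' {n | ¬ p ∣ n}) := by
  intro x hx
  obtain ⟨t, rfl⟩ := Ideal.mem_span_singleton'.mp hx
  clear hx
  have ht : t ∈ Submodule.span A (Set.range b) := b.span_eq ▸ Submodule.mem_top
  induction ht using Submodule.span_induction with
  | mem _ h => obtain ⟨n, rfl⟩ := h; rw [mul_comm]; exact hb.basis_one_mul_mem_span hzero n
  | zero => simp
  | add _ _ _ _ h₁ h₂ => rw [add_mul]; exact add_mem h₁ h₂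
  | smul a _ _ h => rw [smul_mul_assoc]; exact Submodule.smul_mem _ a h

lemma basis_mem_span_one (hb : IsTwistedDividedPowerBasis q y b)
    (hzero : ∀ m, p ∣ m → qInt q m = 0) (hunit : ∀ m, ¬ p ∣ m → IsUnit (qInt q m))
    {n : ℕ} (hn : ¬ p ∣ n) : b n ∈ Ideal.span {b 1} := by
  induction n using Nat.strong_induction_on with
  | _ n ih =>
  rcases n with _ | m
  · exact absurd (dvd_zero p) hn
  have hmem : qInt q (m + 1) • b (m + 1) ∈ Ideal.span {b 1} := by
    have h := hb.basis_one_mul m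
    rw [eq_sub_iff_add_eq] at h
    rw [← h]
    refine add_mem (Ideal.mul_mem_right _ _ (Ideal.mem_span_singleton_self _)) ?_
    by_cases hm : p ∣ m
    · simp [hzero m hm]
    · rw [Algebra.smul_def]
      exact Ideal.mul_mem_left _ _ (ih m m.lt_succ_self hm)
  obtain ⟨u, hu⟩ := hunit (m + 1) hn
  rw [← hu] at hmem
  exact (Submodule.smul_mem_iff' (p := (Ideal.span {b 1}).restrictScalars A) u).mp hmem

lemma restrictScalars_span_eq (hb : IsTwistedDividedPowerBasis q y b)
    (hzero : ∀ m, p ∣ m → qInt q m = 0) (hunit : ∀ m, ¬ p ∣ m → IsUnit (qInt q m)) :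
    (Ideal.span {b 1}).restrictScalars A = Submodule.span A (b '' {n | ¬ p ∣ n}) :=
  le_antisymm (hb.restrictScalars_span_le hzero) <| Submodule.span_le.mpr <| by
    rintro _ ⟨n, hn, rfl⟩
    exact hb.basis_mem_span_one hzero hunit hn

end IsTwistedDividedPowerBasis

section TwistedDividedPowerMap

variable {R A B C : Type*} [CommRing R] [CommRing A] [Algebra R A] [CommRing B] [Algebra A B]
  [CommRing C] [Algebra A C] {q : R} {p : ℕ}

lemma dpCoeff_mul_mul_mul (hp : 0 < p) (hp0 : qInt q p = 0)
    (hreg : ∀ m : ℕ, 0 < m → m < p → IsRegular (qInt q m)) (y : A) (j k l : ℕ) :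
    dpCoeff (algebraMap R A q) y (j * p) (k * p) (l * p) = dpCoeff 1 (y ^ p) j k l := by
  have hsign := congrArg (algebraMap R A) (neg_one_pow_mul_pow_choose_two_mul_char hp hp0 hreg l)
  simp only [map_mul, map_pow, map_neg, map_one] at hsign
  rw [dpCoeff, dpCoeff, ← Nat.add_mul, ← Nat.sub_mul, ← Nat.choose_two_right, ← map_qChoose,
    ← map_qChoose, qChoose_mul_mul hp hp0 hreg, qChoose_mul_mul hp hp0 hreg, qChoose_one_left,
    qChoose_one_left, one_pow, map_natCast, map_natCast, ← pow_mul, mul_comm p l]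
  linear_combination (((j + k - l).choose j : A) * (j.choose l : A) * y ^ (l * p)) * hsign

lemma dpCoeff_mul_eq_zero_of_not_dvd (hp : 0 < p) (hp0 : qInt q p = 0)
    (hreg : ∀ m : ℕ, 0 < m → m < p → IsRegular (qInt q m)) (y : A) (j n : ℕ) {i : ℕ}
    (hi : ¬ p ∣ i) : dpCoeff (algebraMap R A q) y (j * p) n i = 0 := by
  rw [dpCoeff, ← map_qChoose q _ (j * p) i, qChoose_mul_eq_zero_of_not_dvd hp hp0 hreg j hi,
    map_zero, mul_zero, zero_mul]

theorem exists_algHom_twistedDividedPow (hp : 0 < p) (hp0 : qInt q p = 0)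
    (hreg : ∀ m : ℕ, 0 < m → m < p → IsRegular (qInt q m)) {y : A}
    {b : Module.Basis ℕ A B}
    (hb : IsTwistedDividedPowerBasis (algebraMap R A q) y b) {c : Module.Basis ℕ A C}
    (hc : IsTwistedDividedPowerBasis 1 (y ^ p) c) :
    ∃ u : C →ₐ[A] B, ∀ k, u (c k) = b (k * p) := by
  refine c.exists_algHom_of_constr_mul _ ?_ fun j k => ?_
  · rw [← hc.basis_zero, c.constr_basis, zero_mul, hb.basis_zero]
  rw [hc j k, hb, ← min_mul_of_nonneg _ _ p.zero_le, map_sum,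
    sum_range_mul_add_one_eq_sum_mul hp _ fun i hi => by
      rw [dpCoeff_mul_eq_zero_of_not_dvd hp hp0 hreg y j _ hi, zero_smul]]
  refine sum_congr rfl fun l _ => ?_
  rw [map_smul, c.constr_basis, dpCoeff_mul_mul_mul hp hp0 hreg, ← Nat.add_mul, ← Nat.sub_mul]

lemma injective_and_range_of_apply_basis {u : C →ₐ[A] B} {b : Module.Basis ℕ A B}
    {c : Module.Basis ℕ A C} (hp : 0 < p) (hu : ∀ k, u (c k) = b (k * p)) :
    Function.Injective u ∧
      LinearMap.range u.toLinearMap = Submodule.span A (b '' {n | p ∣ n}) := by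
  have hconstr : u.toLinearMap = c.constr A fun k => b (k * p) :=
    (c.constr_eq A fun k => (hu k).symm).symm
  refine ⟨?_, ?_⟩
  · rw [← AlgHom.coe_toLinearMap, hconstr]
    exact c.injective_constr_of_linearIndependent (R₂ := A)
      (b.linearIndependent.comp _ fun a a' h => Nat.eq_of_mul_eq_mul_right hp h)
  · rw [hconstr, c.constr_range, Set.range_comp']
    congr 2
    ext n
    exact ⟨fun ⟨k, hk⟩ => ⟨k, by rw [← hk, mul_comm]⟩,
      fun ⟨k, hk⟩ => ⟨k, by rw [hk, mul_comm]⟩⟩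

theorem exists_algEquiv_quotient_twistedDividedPow (hp : 0 < p) (hp0 : qInt q p = 0)
    (hmin : ∀ m : ℕ, 0 < m → m < p → qInt q m ≠ 0)
    (hdiv : ∀ m : ℕ, qInt q m = 0 ∨ IsUnit (qInt q m)) {y : A} {b : Module.Basis ℕ A B}
    (hb : IsTwistedDividedPowerBasis (algebraMap R A q) y b) {c : Module.Basis ℕ A C}
    (hc : IsTwistedDividedPowerBasis 1 (y ^ p) c) :
    ∃ e : C ≃ₐ[A] B ⧸ Ideal.span {b 1},
      ∀ k, e (c k) = Ideal.Quotient.mk (Ideal.span {b 1}) (b (k * p)) := by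
  have hunit (m : ℕ) (hm : ¬ p ∣ m) : IsUnit (qInt q m) :=
    (hdiv m).resolve_left (mt (qInt_eq_zero_iff_dvd hp hp0 hmin m).mp hm)
  obtain ⟨u, hu⟩ := exists_algHom_twistedDividedPow hp hp0
    (fun m h0 hlt => (hunit m (Nat.not_dvd_of_pos_of_lt h0 hlt)).isRegular) hb hc
  obtain ⟨hinj, hrange⟩ := injective_and_range_of_apply_basis hp hu
  have hcompl : IsCompl (LinearMap.range u.toLinearMap) ((Ideal.span {b 1}).restrictScalars A) := by
    rw [hrange, hb.restrictScalars_span_eq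
      (fun m hm => by rw [← map_qInt, (qInt_eq_zero_iff_dvd hp hp0 hmin m).mpr hm, map_zero])
      (fun m hm => by rw [← map_qInt]; exact (hunit m hm).map _)]
    exact b.linearIndependent.isCompl_span_image b.span_eq isCompl_compl
  exact ⟨AlgEquiv.ofBijective _ (AlgHom.bijective_quotient_mkₐ_comp hinj hcompl),
    fun k => by simp [hu]⟩

end TwistedDividedPowerMap

/-- Let `R` have `q`-characteristic `p > 0`, let `B = A⟨ξ⟩_{q,y}` (basis `b`) and
`C = A⟨ω⟩_{1,y^p}` (basis `c`) be twisted divided power polynomial rings. Then: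
(1) if `R` is `q`-flat, the `A`-linear map `u` with `u(ω^{[k]}) = ξ^{[kp]}` is a ring
homomorphism (an `A`-algebra morphism); (2) if `R` is `q`-divisible, it induces an isomorphism
of `A`-algebras `A⟨ω⟩_{1,y^p} ≅ A⟨ξ⟩_{q,y}/(ξ)`. -/
theorem statement5 {R A B C : Type*} [CommRing R] [CommRing A] [Algebra R A]
    [CommRing B] [Algebra A B] [CommRing C] [Algebra A C]
    (q : R) (y : A) (p : ℕ)
    (hp : 0 < p) (hp0 : qInt q p = 0) (hmin : ∀ m : ℕ, 0 < m → m < p → qInt q m ≠ 0)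
    (b : Module.Basis ℕ A B)
    (hb : ∀ m n : ℕ, b m * b n = ∑ i ∈ Finset.range (min m n + 1),
      dpCoeff (algebraMap R A q) y m n i • b (m + n - i))
    (c : Module.Basis ℕ A C)
    (hc : ∀ m n : ℕ, c m * c n = ∑ i ∈ Finset.range (min m n + 1),
      dpCoeff (1 : A) (y ^ p) m n i • c (m + n - i)) :
    ((∀ m : ℕ, qInt q m = 0 ∨ IsRegular (qInt q m)) →
      ∃ u : C →ₐ[A] B, ∀ k : ℕ, u (c k) = b (k * p)) ∧
    ((∀ m : ℕ, qInt q m = 0 ∨ IsUnit (qInt q m)) →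
      ∃ e : C ≃ₐ[A] B ⧸ Ideal.span {b 1},
        ∀ k : ℕ, e (c k) = Ideal.Quotient.mk (Ideal.span {b 1}) (b (k * p))) :=
  ⟨fun hflat => exists_algHom_twistedDividedPow hp hp0
      (fun m h0 hlt => (hflat m).resolve_left (hmin m h0 hlt)) hb hc,
    fun hdiv => exists_algEquiv_quotient_twistedDividedPow hp hp0 hmin hdiv hb hc⟩
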